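/- Let ρ = (ρ_0,…,ρ_t) ∈ ℤ^{t+1} and ρ' = (ρ'_0,…,ρ'_{t'}) ∈ ℤ^{t'+1} each have non-increasing coordinates all at least 1, with ‖ρ‖² ≥ 2g̃ and ‖ρ'‖² ≥ 2g̃, and suppose that ρ realizes (V_i) in dimension t+1 and ρ' realizes (V_i) in dimension t'+1. Then for every integer j ≥ 2, the number of coordinates of ρ equal to j equals the number of coordinates of ρ' equal to j. -/

import Mathlib

/-!
Write `‖ρ‖² = Σ ρᵢ + 2p`. Testing the realization condition at `k = p` with `c = (-1, …, -1)`,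
and at `k = p - 1` with the forced `±1` minimizer, shows `p = g̃`.

For `q ≥ 1` let `γ_q(r) = max_{y ∈ ℤ} (2yr - q y(y+1))`. Writing characteristic vectors as
`c = 2w + 1`, the realization condition at `0 ≤ k ≤ g̃` gives `2(g̃ - k) ≤ 2qV_k + Σᵢ γ_q(ρᵢ)` for
every realizing `ρ`, while for `q ≥ 2` the maximizers `yᵢ = ⌊(ρᵢ - 1)/q⌋` produce a `k` at which the
reverse inequality holds. Hence `Σᵢ γ_q(ρᵢ)` depends only on `(V_i)`. Since `γ_q` vanishes on
`[1, q]` and `γ_q(q + 1) = 2`, these sums determine the multiplicities of the values `≥ 2`, from the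
largest value downwards.
-/

/-- The standard inner product on `ℤ^{t+1}`. -/
def dotP {t : ℕ} (x y : Fin (t + 1) → ℤ) : ℤ := ∑ i, x i * y i

/-- A vector of `ℤ^{t+1}` is characteristic if all of its coordinates are odd. -/
def CharVec {t : ℕ} (c : Fin (t + 1) → ℤ) : Prop := ∀ i, Odd (c i)

/-- `ρ ∈ ℤ^{t+1}` realizes the sequence `(V_i)` if, with `n = ‖ρ‖²`, for every integer `k`
with `2|k| ≤ n` the set `{‖c‖² : c characteristic, c·ρ ≡ n + 2k (mod 2n)}` has least
element `8V_{|k|} + t + 1`. -/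
def Realizes {t : ℕ} (V : ℕ → ℕ) (ρ : Fin (t + 1) → ℤ) : Prop :=
  ∀ k : ℤ, 2 * |k| ≤ dotP ρ ρ →
    IsLeast {N : ℤ | ∃ c : Fin (t + 1) → ℤ, CharVec c ∧
        dotP c ρ ≡ dotP ρ ρ + 2 * k [ZMOD 2 * dotP ρ ρ] ∧ N = dotP c c}
      (8 * (V k.natAbs : ℤ) + t + 1)

open Finset

section dotP

variable {t : ℕ}

lemma sum_mul_sub_one_eq (ρ : Fin (t + 1) → ℤ) :
    ∑ i, ρ i * (ρ i - 1) = dotP ρ ρ - ∑ i, ρ i := by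
  simp only [dotP, ← sum_sub_distrib, mul_sub, mul_one]

lemma dotP_two_mul_add_one_self (w : Fin (t + 1) → ℤ) :
    dotP (fun i => 2 * w i + 1) (fun i => 2 * w i + 1) = t + 1 + 4 * ∑ i, w i * (w i + 1) := by
  have hsq : ∀ i, (2 * w i + 1) * (2 * w i + 1) = 1 + 4 * (w i * (w i + 1)) := fun i => by ring
  simp only [dotP, hsq, sum_add_distrib, ← mul_sum, sum_const, card_univ, Fintype.card_fin,
    nsmul_eq_mul, mul_one]
  push_cast
  ring

lemma dotP_two_mul_add_one_left (w ρ : Fin (t + 1) → ℤ) :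
    dotP (fun i => 2 * w i + 1) ρ = ∑ i, ρ i + 2 * ∑ i, w i * ρ i := by
  simp only [dotP, mul_sum, ← sum_add_distrib]
  exact sum_congr rfl fun i _ => by ring

lemma charVec_two_mul_add_one (w : Fin (t + 1) → ℤ) : CharVec fun i => 2 * w i + 1 :=
  fun i => odd_two_mul_add_one (w i)

lemma CharVec.exists_eq_two_mul_add_one {c : Fin (t + 1) → ℤ} (hc : CharVec c) :
    ∃ w : Fin (t + 1) → ℤ, c = fun i => 2 * w i + 1 := by
  choose w hw using hc
  exact ⟨w, funext hw⟩

end dotP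

lemma mul_add_one_nonneg (w : ℤ) : 0 ≤ w * (w + 1) := by
  rcases le_or_gt 0 w with h | h <;> nlinarith

/-- `gamma q r = max_{y ∈ ℤ} (2yr - q y(y+1))`, attained at `y = ⌊(r - 1)/q⌋`. -/
def gamma (q r : ℤ) : ℤ := 2 * ((r - 1) / q) * r - q * ((r - 1) / q * ((r - 1) / q + 1))

lemma mul_sub_le_gamma {q : ℤ} (hq : 0 < q) (y r : ℤ) :
    2 * y * r - q * (y * (y + 1)) ≤ gamma q r := by
  have hlo : q * ((r - 1) / q) ≤ r - 1 := Int.mul_ediv_self_le hq.ne'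
  have hhi : r - 1 < q * ((r - 1) / q) + q := by
    have := Int.emod_lt_of_pos (r - 1) hq; have := Int.mul_ediv_add_emod (r - 1) q; linarith
  obtain ⟨u, rfl⟩ : ∃ u, y = (r - 1) / q + u := ⟨y - (r - 1) / q, by ring⟩
  unfold gamma
  set e := (r - 1) / q
  rcases le_or_gt 0 u with hu | hu
  · nlinarith [mul_nonneg hq.le (mul_add_one_nonneg (u - 1)),
      mul_nonneg hu (by linarith : 0 ≤ q * e + q - r)]
  · nlinarith [mul_nonneg hq.le (mul_add_one_nonneg u),
      mul_nonneg (by linarith : 0 ≤ -u) (by linarith : 0 ≤ r - 1 - q * e)]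

lemma gamma_eq_zero {q r : ℤ} (h₁ : 1 ≤ r) (hr : r ≤ q) : gamma q r = 0 := by
  simp [gamma, Int.ediv_eq_zero_of_lt (by omega : 0 ≤ r - 1) (by omega : r - 1 < q)]

lemma gamma_add_one_self {q : ℤ} (hq : 0 < q) : gamma q (q + 1) = 2 := by
  simp only [gamma, add_sub_cancel_right, Int.ediv_self hq.ne']
  ring

lemma gamma_one (r : ℤ) : gamma 1 r = r * (r - 1) := by
  simp only [gamma, Int.ediv_one]
  ring

namespace Realizes

variable {V : ℕ → ℕ} {g t t' : ℕ} {ρ : Fin (t + 1) → ℤ} {ρ' : Fin (t' + 1) → ℤ}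

lemma two_mul_le_of_modEq (hρ : Realizes V ρ) {k : ℕ} (hk : 2 * (k : ℤ) ≤ dotP ρ ρ)
    (w : Fin (t + 1) → ℤ)
    (hw : dotP (fun i => 2 * w i + 1) ρ ≡ dotP ρ ρ + 2 * k [ZMOD 2 * dotP ρ ρ]) :
    2 * (V k : ℤ) ≤ ∑ i, w i * (w i + 1) := by
  have hle := (hρ k (by simpa using hk)).2 ⟨_, charVec_two_mul_add_one w, hw, rfl⟩
  rw [dotP_two_mul_add_one_self, Int.natAbs_natCast] at hle
  linarith

lemma exists_modEq (hρ : Realizes V ρ) {k : ℕ} (hk : 2 * (k : ℤ) ≤ dotP ρ ρ) :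
    ∃ w : Fin (t + 1) → ℤ,
      dotP (fun i => 2 * w i + 1) ρ ≡ dotP ρ ρ + 2 * k [ZMOD 2 * dotP ρ ρ] ∧
      ∑ i, w i * (w i + 1) = 2 * V k := by
  obtain ⟨c, hc, hmod, hnorm⟩ := (hρ k (by simpa using hk)).1
  obtain ⟨w, rfl⟩ := hc.exists_eq_two_mul_add_one
  rw [dotP_two_mul_add_one_self, Int.natAbs_natCast] at hnorm
  exact ⟨w, hmod, by linarith⟩

lemma le_of_dotP_self_eq (hV : ∀ i, V i = 0 ↔ g ≤ i) (hρ : Realizes V ρ) {p : ℕ}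
    (hn : dotP ρ ρ = ∑ i, ρ i + 2 * p) (hS : 0 ≤ ∑ i, ρ i) : g ≤ p := by
  have hle := hρ.two_mul_le_of_modEq (k := p) (by omega) (fun _ => -1) ?_
  · simp only [neg_add_cancel, mul_zero, sum_const_zero] at hle
    exact (hV p).1 (by omega)
  · rw [dotP_two_mul_add_one_left, Int.modEq_iff_dvd]
    exact ⟨1, by simp only [neg_mul, one_mul, sum_neg_distrib]; linarith⟩

lemma ge_of_dotP_self_eq (hV : ∀ i, V i = 0 ↔ g ≤ i) (hpos : ∀ i, 1 ≤ ρ i)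
    (hρ : Realizes V ρ) {p : ℕ} (hn : dotP ρ ρ = ∑ i, ρ i + 2 * p) : p ≤ g := by
  set S := ∑ i, ρ i
  have hS : 0 ≤ S := sum_nonneg fun i _ => by linarith [hpos i]
  by_contra! hgp
  obtain ⟨w, hmod, hw⟩ := hρ.exists_modEq (k := p - 1) (by omega)
  rw [(hV _).2 (by omega), Nat.cast_zero, mul_zero,
    sum_eq_zero_iff_of_nonneg fun i _ => mul_add_one_nonneg (w i)] at hw
  set W := ∑ i, w i * ρ i
  have hW : -S ≤ W ∧ W ≤ 0 := by
    have hbd : ∀ i, -ρ i ≤ w i * ρ i ∧ w i * ρ i ≤ 0 := fun i => by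
      rcases mul_eq_zero.1 (hw i (mem_univ i)) with h | h
      · simp [h, (hpos i).trans' zero_le_one]
      · rw [eq_neg_of_add_eq_zero_left h]; constructor <;> linarith [hpos i]
    exact ⟨sum_neg_distrib (f := ρ) ▸ sum_le_sum fun i _ => (hbd i).1,
      sum_nonpos fun i _ => (hbd i).2⟩
  rw [dotP_two_mul_add_one_left, Int.modEq_iff_dvd] at hmod
  have hp : ((p - 1 : ℕ) : ℤ) = p - 1 := by omega
  rw [hp] at hmod
  -- `4p - 2 - 2W` lies strictly between `0` and `2‖ρ‖² = 2S + 4p`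
  have := Int.eq_zero_of_dvd_of_nonneg_of_lt (by omega) (by omega) hmod
  omega

lemma dotP_self_eq (hV : ∀ i, V i = 0 ↔ g ≤ i) (hpos : ∀ i, 1 ≤ ρ i) (hρ : Realizes V ρ) :
    dotP ρ ρ = ∑ i, ρ i + 2 * g := by
  have hS : 0 ≤ ∑ i, ρ i := sum_nonneg fun i _ => by linarith [hpos i]
  have hdiff := sum_mul_sub_one_eq ρ
  obtain ⟨p, hp⟩ : Even (dotP ρ ρ - ∑ i, ρ i) :=
    hdiff ▸ even_sum _ fun i _ => Int.even_mul_pred_self (ρ i)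
  have hp0 : 0 ≤ ∑ i, ρ i * (ρ i - 1) :=
    sum_nonneg fun i _ => mul_nonneg (by linarith [hpos i]) (by linarith [hpos i])
  lift p to ℕ using (by linarith)
  have hn : dotP ρ ρ = ∑ i, ρ i + 2 * p := by linarith
  rw [hn, le_antisymm (hρ.ge_of_dotP_self_eq hV hpos hn) (hρ.le_of_dotP_self_eq hV hn hS)]

lemma le_sum_gamma (hV : ∀ i, V i = 0 ↔ g ≤ i) (hpos : ∀ i, 1 ≤ ρ i) (hρ : Realizes V ρ)
    {q : ℤ} (hq : 0 < q) {k : ℕ} (hk : k ≤ g) :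
    2 * ((g : ℤ) - k) ≤ 2 * q * V k + ∑ i, gamma q (ρ i) := by
  have hn := hρ.dotP_self_eq hV hpos
  have hS : 0 ≤ ∑ i, ρ i := sum_nonneg fun i _ => by linarith [hpos i]
  obtain ⟨w, hmod, hw⟩ := hρ.exists_modEq (k := k) (by omega)
  set W := ∑ i, w i * ρ i
  have hup : 2 * W - q * (2 * V k) ≤ ∑ i, gamma q (ρ i) := by
    rw [← hw, mul_sum, mul_sum, ← sum_sub_distrib]
    exact sum_le_sum fun i _ => by linarith [mul_sub_le_gamma hq (w i) (ρ i)]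
  have hdown : -2 * ∑ i, ρ i - 2 * W - q * (2 * V k) ≤ ∑ i, gamma q (ρ i) := by
    rw [← hw, mul_sum, mul_sum, mul_sum, ← sum_sub_distrib, ← sum_sub_distrib]
    exact sum_le_sum fun i _ => by linarith [mul_sub_le_gamma hq (-1 - w i) (ρ i)]
  rw [dotP_two_mul_add_one_left, Int.modEq_iff_dvd, hn] at hmod
  obtain ⟨m, hm⟩ := hmod
  -- `W ≡ g + k (mod ‖ρ‖²)`: either `W ≥ g + k`, or `W ≤ k - g - Σ ρᵢ`
  rcases le_or_gt m 0 with hm0 | hm0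
  · have : (∑ i, ρ i + 2 * g) * m ≤ 0 := mul_nonpos_of_nonneg_of_nonpos (by omega) hm0
    linarith
  · have : ∑ i, ρ i + 2 * g ≤ (∑ i, ρ i + 2 * g) * m := le_mul_of_one_le_right (by omega) hm0
    linarith

lemma exists_sum_gamma_le (hV : ∀ i, V i = 0 ↔ g ≤ i) (hpos : ∀ i, 1 ≤ ρ i)
    (hρ : Realizes V ρ) {q : ℤ} (hq : 2 ≤ q) :
    ∃ k : ℕ, k ≤ g ∧ 2 * q * V k + ∑ i, gamma q (ρ i) ≤ 2 * ((g : ℤ) - k) := by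
  have hn := hρ.dotP_self_eq hV hpos
  set e : Fin (t + 1) → ℤ := fun i => (ρ i - 1) / q
  set h := ∑ i, e i * ρ i
  have he : ∀ i, 0 ≤ e i ∧ 2 * e i ≤ ρ i - 1 := fun i => by
    have he0 : 0 ≤ e i := Int.ediv_nonneg (by linarith [hpos i]) (by omega)
    have := Int.mul_ediv_self_le (x := ρ i - 1) (by omega : q ≠ 0)
    exact ⟨he0, by nlinarith⟩
  have hS : 0 ≤ ∑ i, ρ i := sum_nonneg fun i _ => by linarith [hpos i]
  have hh0 : 0 ≤ h := sum_nonneg fun i _ => mul_nonneg (he i).1 (by linarith [hpos i])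
  have hhg : 2 * h ≤ 2 * g := by
    calc 2 * h = ∑ i, 2 * e i * ρ i := by simp only [h, mul_sum, mul_assoc]
      _ ≤ ∑ i, (ρ i - 1) * ρ i :=
        sum_le_sum fun i _ => mul_le_mul_of_nonneg_right (he i).2 (by linarith [hpos i])
      _ = 2 * g := by
        simp only [mul_comm _ (ρ _), sum_mul_sub_one_eq, hn, add_sub_cancel_left]
  -- the characteristic vector `-(2e + 1)` satisfies the congruence at `k = g - h`
  obtain ⟨k, hk⟩ : ∃ k : ℕ, (k : ℤ) = g - h := ⟨(g - h).toNat, Int.toNat_of_nonneg (by omega)⟩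
  refine ⟨k, by omega, ?_⟩
  have hle := hρ.two_mul_le_of_modEq (k := k) (by omega) (fun i => -1 - e i) ?_
  · have hγ : ∑ i, gamma q (ρ i) = 2 * h - q * ∑ i, e i * (e i + 1) := by
      simp only [gamma, h, e, mul_sum, ← sum_sub_distrib]
      exact sum_congr rfl fun i _ => by ring
    have hee : ∑ i, (-1 - e i) * (-1 - e i + 1) = ∑ i, e i * (e i + 1) :=
      sum_congr rfl fun i _ => by ring
    rw [hee] at hle
    have := mul_le_mul_of_nonneg_left hle (by omega : (0 : ℤ) ≤ q)
    linarith
  · rw [dotP_two_mul_add_one_left, Int.modEq_iff_dvd]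
    refine ⟨1, ?_⟩
    simp only [h, sub_mul, neg_mul, one_mul, sum_sub_distrib, sum_neg_distrib] at hk ⊢
    linarith

lemma sum_gamma_le (hV : ∀ i, V i = 0 ↔ g ≤ i) (hpos : ∀ i, 1 ≤ ρ i) (hρ : Realizes V ρ)
    (hpos' : ∀ i, 1 ≤ ρ' i) (hρ' : Realizes V ρ') {q : ℤ} (hq : 2 ≤ q) :
    ∑ i, gamma q (ρ i) ≤ ∑ i, gamma q (ρ' i) := by
  obtain ⟨k, hkg, hk⟩ := hρ.exists_sum_gamma_le hV hpos hq
  linarith [hρ'.le_sum_gamma hV hpos' (by omega : 0 < q) hkg]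

lemma sum_gamma_eq (hV : ∀ i, V i = 0 ↔ g ≤ i) (hpos : ∀ i, 1 ≤ ρ i) (hρ : Realizes V ρ)
    (hpos' : ∀ i, 1 ≤ ρ' i) (hρ' : Realizes V ρ') {q : ℤ} (hq : 1 ≤ q) :
    ∑ i, gamma q (ρ i) = ∑ i, gamma q (ρ' i) := by
  rcases hq.eq_or_lt with rfl | hq
  · simp only [gamma_one, sum_mul_sub_one_eq, hρ.dotP_self_eq hV hpos,
      hρ'.dotP_self_eq hV hpos', add_sub_cancel_left]
  · exact le_antisymm (hρ.sum_gamma_le hV hpos hpos' hρ' hq)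
      (hρ'.sum_gamma_le hV hpos' hpos hρ hq)

end Realizes

section counting

variable {ι ι' : Type*} [Fintype ι] [Fintype ι']

lemma sum_comp_eq_sum_card_mul {κ R : Type*} [DecidableEq κ] [NonAssocSemiring R] (v : ι → κ)
    {J : Finset κ} (hv : ∀ i, v i ∈ J) (f : κ → R) :
    ∑ i, f (v i) = ∑ u ∈ J, (#{i | v i = u} : R) * f u := by
  rw [← sum_fiberwise_of_maps_to' fun i _ => hv i]
  simp only [sum_const, nsmul_eq_mul]

lemma sum_gamma_sub_sum_gamma (v : ι → ℤ) (v' : ι' → ℤ) (hv : ∀ i, 1 ≤ v i)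
    (hv' : ∀ i, 1 ≤ v' i) {j : ℤ} (hj : 2 ≤ j)
    (habove : ∀ u, j < u → #{i | v i = u} = #{i | v' i = u}) :
    ∑ i, gamma (j - 1) (v i) - ∑ i, gamma (j - 1) (v' i) =
      2 * ((#{i | v i = j} : ℤ) - #{i | v' i = j}) := by
  obtain ⟨B, hB⟩ := ((Set.finite_range v).union (Set.finite_range v')).bddAbove
  set J := Icc 1 (max B j)
  have hJ : ∀ x ∈ Set.range v ∪ Set.range v', 1 ≤ x → x ∈ J := fun x hx h1 =>
    mem_Icc.2 ⟨h1, (hB hx).trans (le_max_left _ _)⟩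
  rw [sum_comp_eq_sum_card_mul v (fun i => hJ _ (.inl ⟨i, rfl⟩) (hv i)),
    sum_comp_eq_sum_card_mul v' (fun i => hJ _ (.inr ⟨i, rfl⟩) (hv' i)), ← sum_sub_distrib,
    sum_eq_single_of_mem j (mem_Icc.2 ⟨by omega, le_max_right _ _⟩)]
  · have hγ : gamma (j - 1) j = 2 := by simpa using gamma_add_one_self (q := j - 1) (by omega)
    rw [← sub_mul, hγ, mul_comm]
  · intro u hu hne
    rcases hne.lt_or_gt with h | h
    · rw [gamma_eq_zero (mem_Icc.1 hu).1 (by omega), mul_zero, mul_zero, sub_zero]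
    · rw [habove u h, sub_self]

lemma card_eq_of_sum_gamma_eq (v : ι → ℤ) (v' : ι' → ℤ) (hv : ∀ i, 1 ≤ v i)
    (hv' : ∀ i, 1 ≤ v' i)
    (h : ∀ q, 1 ≤ q → ∑ i, gamma q (v i) = ∑ i, gamma q (v' i)) {j : ℤ} (hj : 2 ≤ j) :
    #{i | v i = j} = #{i | v' i = j} := by
  by_contra hne
  obtain ⟨B, hB⟩ := ((Set.finite_range v).union (Set.finite_range v')).bddAbove
  have hbdd : ∀ u, #{i | v i = u} ≠ #{i | v' i = u} → u ≤ B := by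
    intro u hu
    by_contra! hBu
    refine hu ((card_eq_zero.2 (filter_eq_empty_iff.2 ?_)).trans
      (card_eq_zero.2 (filter_eq_empty_iff.2 ?_)).symm) <;>
    · rintro i - rfl
      exact (hB (by simp)).not_gt hBu
  obtain ⟨j₀, ⟨hj₀, hne₀⟩, hmax⟩ := Int.exists_greatest_of_bdd
    (P := fun u => 2 ≤ u ∧ #{i | v i = u} ≠ #{i | v' i = u})
    ⟨B, fun u hu => hbdd u hu.2⟩ ⟨j, hj, hne⟩
  have hdiff := sum_gamma_sub_sum_gamma v v' hv hv' hj₀ fun u hu => by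
    by_contra hne'
    exact (hmax u ⟨by omega, hne'⟩).not_gt hu
  rw [h _ (by omega), sub_self] at hdiff
  omega

end counting

theorem stmt7_general (V : ℕ → ℕ) (g : ℕ)
    (hV2 : ∀ i, V i = 0 ↔ g ≤ i)
    (t t' : ℕ) (ρ : Fin (t + 1) → ℤ) (ρ' : Fin (t' + 1) → ℤ)
    (hpos : ∀ i, 1 ≤ ρ i)
    (hreal : Realizes V ρ)
    (hpos' : ∀ i, 1 ≤ ρ' i)
    (hreal' : Realizes V ρ') :
    ∀ j : ℤ, 2 ≤ j →
      (Finset.univ.filter (fun i : Fin (t + 1) => ρ i = j)).card =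
      (Finset.univ.filter (fun i : Fin (t' + 1) => ρ' i = j)).card := fun _ hj =>
  card_eq_of_sum_gamma_eq ρ ρ' hpos hpos'
    (fun _ hq => hreal.sum_gamma_eq hV2 hpos hpos' hreal' hq) hj

/-- If `ρ ∈ ℤ^{t+1}` and `ρ' ∈ ℤ^{t'+1}` each have non-increasing coordinates all at
least `1`, norms at least `2g̃`, and both realize `(V_i)` (in their respective
dimensions), then for every integer `j ≥ 2` the number of coordinates of `ρ` equal to
`j` equals the number of coordinates of `ρ'` equal to `j`. -/
theorem stmt7 (V : ℕ → ℕ) (g : ℕ)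
    (hV1 : ∀ i, V (i + 1) ≤ V i)
    (hV2 : ∀ i, V i = 0 ↔ g ≤ i)
    (hV3 : ∀ i, V i ≤ V (i + 1) + 1)
    (t t' : ℕ) (ρ : Fin (t + 1) → ℤ) (ρ' : Fin (t' + 1) → ℤ)
    (hmono : ∀ i j : Fin (t + 1), i ≤ j → ρ j ≤ ρ i)
    (hpos : ∀ i, 1 ≤ ρ i)
    (hg : 2 * (g : ℤ) ≤ dotP ρ ρ)
    (hreal : Realizes V ρ)
    (hmono' : ∀ i j : Fin (t' + 1), i ≤ j → ρ' j ≤ ρ' i)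
    (hpos' : ∀ i, 1 ≤ ρ' i)
    (hg' : 2 * (g : ℤ) ≤ dotP ρ' ρ')
    (hreal' : Realizes V ρ') :
    ∀ j : ℤ, 2 ≤ j →
      (Finset.univ.filter (fun i : Fin (t + 1) => ρ i = j)).card =
      (Finset.univ.filter (fun i : Fin (t' + 1) => ρ' i = j)).card :=
  stmt7_general V g hV2 t t' ρ ρ' hpos hreal hpos' hreal'
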